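/- Let z ∈ R be nonzero with weighted total degree t > 1, and let z' be the leading form of z. Then for every n ≥ 0, the element g_n(z) has weighted total degree (d^n − e^n)·t, and its leading form equals z'^{d^n − e^n}. -/

import Mathlib

open MvPolynomial

/-- Variable index type for the ring
`R = k[ζ_1,…,ζ_N, ξ_1,…,ξ_N, a_1,…,a_{d-1}, b_0,…,b_{d-e-1}]` with `N = 2d-1-e`. -/
abbrev Vars (d e : ℕ) : Type :=
  (Fin (2 * d - 1 - e) ⊕ Fin (2 * d - 1 - e)) ⊕ (Fin (d - 1) ⊕ Fin (d - e))

/-- The weights: `deg ζ_i = 1`, `deg ξ_i = e`, `deg a_i = d - i`, `deg b_j = d - e - j`. -/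
noncomputable def wt (d e : ℕ) : Vars d e → ℕ
  | .inl (.inl _) => 1
  | .inl (.inr _) => e
  | .inr (.inl i) => d - (i.1 + 1)
  | .inr (.inr j) => d - e - j.1

variable (k : Type) [CommRing k]

/-- The critical point `ζ_i` (indexing `1 ≤ i ≤ N` by `Fin N`). -/
noncomputable def zeta (d e : ℕ) (i : Fin (2 * d - 1 - e)) : MvPolynomial (Vars d e) k :=
  X (.inl (.inl i))

/-- The critical value `ξ_i` (indexing `1 ≤ i ≤ N` by `Fin N`). -/
noncomputable def xi (d e : ℕ) (i : Fin (2 * d - 1 - e)) : MvPolynomial (Vars d e) k :=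
  X (.inl (.inr i))

/-- The coefficient `a_i`, with the conventions `a_0 = 0`, `a_d = 1`. -/
noncomputable def coefA (d e : ℕ) (i : ℕ) : MvPolynomial (Vars d e) k :=
  if i = d then 1
  else if h : 0 < i ∧ i < d then X (.inr (.inl ⟨i - 1, by omega⟩)) else 0

/-- The coefficient `b_j`, with the convention `b_{d-e} = 1`. -/
noncomputable def coefB (d e : ℕ) (j : ℕ) : MvPolynomial (Vars d e) k :=
  if j = d - e then 1
  else if h : j < d - e then X (.inr (.inr ⟨j, h⟩)) else 0

/-- `f(z) = ∑_{i=1}^{d} a_i z^i` (note `a_0 = 0`). -/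
noncomputable def fpoly (d e : ℕ) (z : MvPolynomial (Vars d e) k) : MvPolynomial (Vars d e) k :=
  ∑ i ∈ Finset.range (d + 1), coefA k d e i * z ^ i

/-- `g(z) = ∑_{j=0}^{d-e} b_j z^j`. -/
noncomputable def gpoly (d e : ℕ) (z : MvPolynomial (Vars d e) k) : MvPolynomial (Vars d e) k :=
  ∑ j ∈ Finset.range (d - e + 1), coefB k d e j * z ^ j

/-- The pair `(f_n(z), g_n(z))` defined recursively by `f_0(z) = z`, `g_0(z) = 1`,
`f_n(z) = ∑ a_i f_{n-1}(z)^i g_{n-1}(z)^{d-i}`, `g_n(z) = ∑ b_i f_{n-1}(z)^i g_{n-1}(z)^{d-i}`. -/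
noncomputable def FG (d e : ℕ) : ℕ → MvPolynomial (Vars d e) k →
    MvPolynomial (Vars d e) k × MvPolynomial (Vars d e) k
  | 0, z => (z, 1)
  | n + 1, z =>
    (∑ i ∈ Finset.range (d + 1), coefA k d e i * (FG d e n z).1 ^ i * (FG d e n z).2 ^ (d - i),
     ∑ i ∈ Finset.range (d - e + 1),
        coefB k d e i * (FG d e n z).1 ^ i * (FG d e n z).2 ^ (d - i))

/-- The critical point equation in degree `κ`:
`∑_{i+j=κ+1} (i-j) a_i b_j - e (-1)^{N-κ} σ_{N-κ}(ζ_1,…,ζ_N)`. -/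
noncomputable def critEq (d e : ℕ) (κ : ℕ) : MvPolynomial (Vars d e) k :=
  (∑ i ∈ Finset.range (d + 1), ∑ j ∈ Finset.range (d - e + 1),
      if i + j = κ + 1 then (((i : ℤ) - (j : ℤ) : ℤ) : MvPolynomial (Vars d e) k) *
        coefA k d e i * coefB k d e j else 0)
    - (e : MvPolynomial (Vars d e) k) * (-1) ^ (2 * d - 1 - e - κ) *
      ∑ s ∈ Finset.powersetCard (2 * d - 1 - e - κ) (Finset.univ : Finset (Fin (2 * d - 1 - e))),
        ∏ i ∈ s, zeta k d e i

/-- The leading form of `p`: its weighted-homogeneous component of degree equal to its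
weighted total degree. -/
noncomputable def leadForm (d e : ℕ) (p : MvPolynomial (Vars d e) k) : MvPolynomial (Vars d e) k :=
  weightedHomogeneousComponent (wt d e) (weightedTotalDegree (wt d e) p) p


/-!
Sending a polynomial `p = ∑ₙ pₙ` (`pₙ` its weight-`n` component) to `∑ₙ pₙ Tⁿ` is a ring
homomorphism into polynomials in `T` which turns the weighted total degree into `natDegree` and the
leading form into the leading coefficient; over a domain both are therefore multiplicative.
In the recursion for `(f_n, g_n)`, the terms `f^d` and `f^(d-e) g^e` strictly dominate: every other
term trades some factors `f` for factors `g`, each trade costing weight `e^n t > 1`, while its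
coefficient `a_i` or `b_j` gains back only one unit of weight per trade. Induction on `n` then
gives `deg f_n = d^n t` and `deg g_n = (d^n - e^n) t`, with the matching powers of `z'` as leading
forms.
-/

namespace MvPolynomial

section WeightedGrading

variable {R σ : Type*} [CommSemiring R] (w : σ → ℕ)

noncomputable def weightedLeadingForm (p : MvPolynomial σ R) : MvPolynomial σ R :=
  weightedHomogeneousComponent w (weightedTotalDegree w p) p

noncomputable def weightedGrading : MvPolynomial σ R →ₐ[R] Polynomial (MvPolynomial σ R) :=
  aeval fun v => Polynomial.monomial (w v) (X v)

theorem weightedGrading_monomial (m : σ →₀ ℕ) (c : R) :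
    weightedGrading w (monomial m c) = Polynomial.monomial (Finsupp.weight w m) (monomial m c) := by
  classical
  simp_rw [weightedGrading, aeval_monomial, Finsupp.prod, Polynomial.monomial_pow,
    ← Polynomial.C_mul_X_pow_eq_monomial, Finset.prod_mul_distrib, ← map_prod,
    Finset.prod_pow_eq_pow_sum, monomial_eq, Finsupp.prod, Finsupp.weight_apply, Finsupp.sum,
    smul_eq_mul, Polynomial.algebraMap_apply, algebraMap_eq, map_mul, mul_comm (m _)]
  ring

theorem coeff_weightedGrading (p : MvPolynomial σ R) (n : ℕ) :
    (weightedGrading w p).coeff n = weightedHomogeneousComponent w n p := by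
  classical
  induction p using MvPolynomial.induction_on' with
  | monomial m c =>
    ext m'
    rw [weightedGrading_monomial, Polynomial.coeff_monomial, coeff_weightedHomogeneousComponent]
    by_cases hm : m = m' <;> split_ifs <;> simp_all [coeff_monomial]
  | add p q hp hq => simp [hp, hq]

theorem weightedLeadingForm_ne_zero {p : MvPolynomial σ R} (hp : p ≠ 0) :
    weightedLeadingForm w p ≠ 0 := by
  classical
  obtain ⟨m, hm, hmax⟩ : ∃ m ∈ p.support, weightedTotalDegree w p = Finsupp.weight w m :=
    Finset.exists_mem_eq_sup p.support (support_nonempty.mpr hp) (Finsupp.weight w)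
  intro h
  have hcoeff := coeff_weightedHomogeneousComponent (w := w) (n := weightedTotalDegree w p)
    (φ := p) m
  rw [if_pos hmax.symm, ← weightedLeadingForm, h, coeff_zero] at hcoeff
  exact mem_support_iff.mp hm hcoeff.symm

theorem weightedLeadingForm_eq_zero_iff {p : MvPolynomial σ R} :
    weightedLeadingForm w p = 0 ↔ p = 0 := by
  refine ⟨not_imp_not.mp (weightedLeadingForm_ne_zero w), ?_⟩
  rintro rfl
  exact map_zero _

theorem natDegree_weightedGrading (p : MvPolynomial σ R) :
    (weightedGrading w p).natDegree = weightedTotalDegree w p := by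
  rcases eq_or_ne p 0 with rfl | hp
  · simp [weightedTotalDegree_zero]
  refine le_antisymm ?_ (Polynomial.le_natDegree_of_ne_zero ?_)
  · rw [Polynomial.natDegree_le_iff_coeff_eq_zero]
    intro n hn
    rw [coeff_weightedGrading]
    exact weightedHomogeneousComponent_eq_zero n p hn
  · rw [coeff_weightedGrading]
    exact weightedLeadingForm_ne_zero w hp

theorem leadingCoeff_weightedGrading (p : MvPolynomial σ R) :
    (weightedGrading w p).leadingCoeff = weightedLeadingForm w p := by
  rw [Polynomial.leadingCoeff, natDegree_weightedGrading, coeff_weightedGrading,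
    weightedLeadingForm]

theorem weightedGrading_ne_zero {p : MvPolynomial σ R} (hp : p ≠ 0) : weightedGrading w p ≠ 0 :=
  fun h => weightedLeadingForm_ne_zero w hp <| by
    rw [← leadingCoeff_weightedGrading, h, Polynomial.leadingCoeff_zero]

theorem weightedTotalDegree_mul_le (p q : MvPolynomial σ R) :
    weightedTotalDegree w (p * q) ≤ weightedTotalDegree w p + weightedTotalDegree w q := by
  simpa only [← natDegree_weightedGrading, map_mul] using Polynomial.natDegree_mul_le

theorem weightedTotalDegree_le_of_isWeightedHomogeneous {p : MvPolynomial σ R} {n : ℕ}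
    (hp : IsWeightedHomogeneous w p n) : weightedTotalDegree w p ≤ n :=
  Finset.sup_le fun _ hm => (hp (mem_support_iff.mp hm)).le

theorem weightedTotalDegree_sum_lt {ι : Type*} {s : Finset ι} (hs : s.Nonempty)
    {f : ι → MvPolynomial σ R} {B : ℕ} (h : ∀ i ∈ s, weightedTotalDegree w (f i) < B) :
    weightedTotalDegree w (∑ i ∈ s, f i) < B := by
  classical
  obtain ⟨i₀, hi₀⟩ := hs
  refine (Finset.sup_lt_iff (Nat.zero_lt_of_lt (h i₀ hi₀))).mpr fun m hm => ?_
  obtain ⟨i, hi, hmi⟩ := Finset.mem_biUnion.mp (support_sum hm)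
  exact (le_weightedTotalDegree w hmi).trans_lt (h i hi)

theorem weightedTotalDegree_sum_add_of_lt {ι : Type*} {s : Finset ι}
    {f : ι → MvPolynomial σ R} {p : MvPolynomial σ R}
    (h : ∀ i ∈ s, weightedTotalDegree w (f i) < weightedTotalDegree w p) :
    weightedTotalDegree w (∑ i ∈ s, f i + p) = weightedTotalDegree w p ∧
      weightedLeadingForm w (∑ i ∈ s, f i + p) = weightedLeadingForm w p := by
  rcases s.eq_empty_or_nonempty with rfl | hs
  · simp
  have hlt := weightedTotalDegree_sum_lt w hs h
  rw [← natDegree_weightedGrading, ← natDegree_weightedGrading] at hlt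
  simp only [← natDegree_weightedGrading, ← leadingCoeff_weightedGrading, map_add]
  exact ⟨Polynomial.natDegree_add_eq_right_of_natDegree_lt hlt,
    Polynomial.leadingCoeff_add_of_degree_lt (Polynomial.degree_lt_degree hlt)⟩

variable [NoZeroDivisors R]

theorem weightedTotalDegree_mul {p q : MvPolynomial σ R} (hp : p ≠ 0) (hq : q ≠ 0) :
    weightedTotalDegree w (p * q) = weightedTotalDegree w p + weightedTotalDegree w q := by
  simpa only [← natDegree_weightedGrading, map_mul] using
    Polynomial.natDegree_mul (weightedGrading_ne_zero w hp) (weightedGrading_ne_zero w hq)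

theorem weightedTotalDegree_pow (p : MvPolynomial σ R) (n : ℕ) :
    weightedTotalDegree w (p ^ n) = n * weightedTotalDegree w p := by
  simpa only [← natDegree_weightedGrading, map_pow] using Polynomial.natDegree_pow _ n

theorem weightedLeadingForm_mul (p q : MvPolynomial σ R) :
    weightedLeadingForm w (p * q) = weightedLeadingForm w p * weightedLeadingForm w q := by
  simpa only [← leadingCoeff_weightedGrading, map_mul] using Polynomial.leadingCoeff_mul _ _

theorem weightedLeadingForm_pow (p : MvPolynomial σ R) (n : ℕ) :
    weightedLeadingForm w (p ^ n) = weightedLeadingForm w p ^ n := by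
  simpa only [← leadingCoeff_weightedGrading, map_pow] using Polynomial.leadingCoeff_pow _ n

theorem weightedTotalDegree_mul_pow_mul_pow_le {c : MvPolynomial σ R} {m : ℕ}
    (hc : IsWeightedHomogeneous w c m) (p q : MvPolynomial σ R) (i j : ℕ) :
    weightedTotalDegree w (c * p ^ i * q ^ j) ≤
      m + i * weightedTotalDegree w p + j * weightedTotalDegree w q := by
  calc weightedTotalDegree w (c * p ^ i * q ^ j)
      ≤ weightedTotalDegree w c + weightedTotalDegree w (p ^ i) + weightedTotalDegree w (q ^ j) :=
        (weightedTotalDegree_mul_le w _ _).trans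
          (Nat.add_le_add_right (weightedTotalDegree_mul_le w _ _) _)
    _ ≤ _ := by
      rw [weightedTotalDegree_pow, weightedTotalDegree_pow]
      gcongr
      exact weightedTotalDegree_le_of_isWeightedHomogeneous w hc

end WeightedGrading

end MvPolynomial

theorem tsub_mul_add_mul_tsub {d e A E : ℕ} (hed : e ≤ d) (hEA : E ≤ A) :
    (d - e) * A + e * (A - E) = d * A - e * E := by
  have : e * E ≤ d * A := Nat.mul_le_mul hed hEA
  zify [hed, hEA, this]
  ring

theorem add_mul_add_mul_tsub_lt {d i A E t : ℕ} (hi : i < d) (hEA : E ≤ A) (hEt : 1 < E * t) :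
    (d - i) + i * (A * t) + (d - i) * ((A - E) * t) < d * (A * t) := by
  have key : d - i < (d - i) * (E * t) := lt_mul_right (by omega) hEt
  zify [hi.le, hEA] at key ⊢
  linear_combination key

theorem tsub_add_mul_add_mul_tsub_lt {d e i A E t : ℕ} (hi : i < d - e) (hEA : E ≤ A)
    (hEt : 1 < E * t) :
    (d - e - i) + i * (A * t) + (d - i) * ((A - E) * t) <
      (d - e) * (A * t) + e * ((A - E) * t) := by
  have key : d - e - i < (d - e - i) * (E * t) := lt_mul_right (by omega) hEt
  zify [hi.le, (by omega : e ≤ d), (by omega : i ≤ d), hEA] at key ⊢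
  linear_combination key

section Iteration

variable {d e : ℕ}

theorem isWeightedHomogeneous_coefA (i : ℕ) :
    IsWeightedHomogeneous (wt d e) (coefA k d e i) (d - i) := by
  unfold coefA
  split_ifs with hd hi
  · rw [hd, Nat.sub_self]
    exact isWeightedHomogeneous_one k _
  · convert isWeightedHomogeneous_X k (wt d e) _ using 1
    simp only [wt]
    omega
  · exact isWeightedHomogeneous_zero k _ _

theorem isWeightedHomogeneous_coefB (j : ℕ) :
    IsWeightedHomogeneous (wt d e) (coefB k d e j) (d - e - j) := by
  unfold coefB
  split_ifs with hd hj
  · rw [hd, Nat.sub_self]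
    exact isWeightedHomogeneous_one k _
  · exact isWeightedHomogeneous_X k (wt d e) _
  · exact isWeightedHomogeneous_zero k _ _

theorem FG_succ_fst (n : ℕ) (z : MvPolynomial (Vars d e) k) :
    (FG k d e (n + 1) z).1 = ∑ i ∈ Finset.range d,
      coefA k d e i * (FG k d e n z).1 ^ i * (FG k d e n z).2 ^ (d - i) + (FG k d e n z).1 ^ d := by
  simp [FG, Finset.sum_range_succ, coefA]

theorem FG_succ_snd (hed : e ≤ d) (n : ℕ) (z : MvPolynomial (Vars d e) k) :
    (FG k d e (n + 1) z).2 = ∑ i ∈ Finset.range (d - e),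
      coefB k d e i * (FG k d e n z).1 ^ i * (FG k d e n z).2 ^ (d - i) +
        (FG k d e n z).1 ^ (d - e) * (FG k d e n z).2 ^ e := by
  simp [FG, Finset.sum_range_succ, coefB, Nat.sub_sub_self hed]

variable [NoZeroDivisors k] {F G : MvPolynomial (Vars d e) k} {A E t : ℕ}

theorem weightedTotalDegree_coefA_term_lt (hEA : E ≤ A) (hEt : 1 < E * t)
    (hF : weightedTotalDegree (wt d e) F = A * t)
    (hG : weightedTotalDegree (wt d e) G = (A - E) * t) {i : ℕ} (hi : i < d) :
    weightedTotalDegree (wt d e) (coefA k d e i * F ^ i * G ^ (d - i)) <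
      weightedTotalDegree (wt d e) (F ^ d) :=
  calc _ ≤ (d - i) + i * weightedTotalDegree (wt d e) F +
          (d - i) * weightedTotalDegree (wt d e) G :=
        weightedTotalDegree_mul_pow_mul_pow_le _ (isWeightedHomogeneous_coefA k i) F G i (d - i)
    _ < d * (A * t) := by
        rw [hF, hG]
        exact add_mul_add_mul_tsub_lt hi hEA hEt
    _ = _ := by rw [weightedTotalDegree_pow, hF]

theorem weightedTotalDegree_coefB_term_lt (hEA : E ≤ A) (hEt : 1 < E * t) (hF0 : F ≠ 0)
    (hG0 : G ≠ 0) (hF : weightedTotalDegree (wt d e) F = A * t)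
    (hG : weightedTotalDegree (wt d e) G = (A - E) * t) {i : ℕ} (hi : i < d - e) :
    weightedTotalDegree (wt d e) (coefB k d e i * F ^ i * G ^ (d - i)) <
      weightedTotalDegree (wt d e) (F ^ (d - e) * G ^ e) :=
  calc _ ≤ (d - e - i) + i * weightedTotalDegree (wt d e) F +
          (d - i) * weightedTotalDegree (wt d e) G :=
        weightedTotalDegree_mul_pow_mul_pow_le _ (isWeightedHomogeneous_coefB k i) F G i (d - i)
    _ < (d - e) * (A * t) + e * ((A - E) * t) := by
        rw [hF, hG]
        exact tsub_add_mul_add_mul_tsub_lt hi hEA hEt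
    _ = _ := by
        rw [weightedTotalDegree_mul _ (pow_ne_zero _ hF0) (pow_ne_zero _ hG0),
          weightedTotalDegree_pow, weightedTotalDegree_pow, hF, hG]

theorem FG_weightedTotalDegree_weightedLeadingForm (he : 0 < e) (hed : e ≤ d)
    {z : MvPolynomial (Vars d e) k} (ht : 1 < weightedTotalDegree (wt d e) z) (n : ℕ) :
    (weightedTotalDegree (wt d e) (FG k d e n z).1 = d ^ n * weightedTotalDegree (wt d e) z ∧
      weightedLeadingForm (wt d e) (FG k d e n z).1 = weightedLeadingForm (wt d e) z ^ d ^ n) ∧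
    (weightedTotalDegree (wt d e) (FG k d e n z).2 =
        (d ^ n - e ^ n) * weightedTotalDegree (wt d e) z ∧
      weightedLeadingForm (wt d e) (FG k d e n z).2 =
        weightedLeadingForm (wt d e) z ^ (d ^ n - e ^ n)) := by
  have hz : weightedLeadingForm (wt d e) z ≠ 0 := by
    refine weightedLeadingForm_ne_zero _ ?_
    rintro rfl
    simp [weightedTotalDegree_zero] at ht
  induction n with
  | zero => simp [FG, ← natDegree_weightedGrading, ← leadingCoeff_weightedGrading]
  | succ n ih =>
    obtain ⟨⟨hF, hF'⟩, hG, hG'⟩ := ih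
    set t := weightedTotalDegree (wt d e) z
    set F := (FG k d e n z).1
    set G := (FG k d e n z).2
    have hF0 : F ≠ 0 := by
      rw [Ne, ← weightedLeadingForm_eq_zero_iff (wt d e), hF']
      exact pow_ne_zero _ hz
    have hG0 : G ≠ 0 := by
      rw [Ne, ← weightedLeadingForm_eq_zero_iff (wt d e), hG']
      exact pow_ne_zero _ hz
    have hEA : e ^ n ≤ d ^ n := Nat.pow_le_pow_left hed n
    have hEt : 1 < e ^ n * t := one_lt_mul (Nat.one_le_pow _ _ he) ht
    have hexp : d ^ (n + 1) - e ^ (n + 1) = (d - e) * d ^ n + e * (d ^ n - e ^ n) := by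
      rw [tsub_mul_add_mul_tsub hed hEA, pow_succ', pow_succ']
    constructor
    · obtain ⟨hdeg, hlf⟩ := weightedTotalDegree_sum_add_of_lt (wt d e) fun i hi =>
        weightedTotalDegree_coefA_term_lt k hEA hEt hF hG (Finset.mem_range.mp hi)
      rw [FG_succ_fst, hdeg, hlf, weightedTotalDegree_pow, weightedLeadingForm_pow, hF, hF',
        ← pow_mul, pow_succ]
      constructor <;> ring
    · obtain ⟨hdeg, hlf⟩ := weightedTotalDegree_sum_add_of_lt (wt d e) fun i hi =>
        weightedTotalDegree_coefB_term_lt k hEA hEt hF0 hG0 hF hG (Finset.mem_range.mp hi)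
      rw [FG_succ_snd k hed, hdeg, hlf, weightedTotalDegree_mul _ (pow_ne_zero _ hF0)
        (pow_ne_zero _ hG0), weightedLeadingForm_mul, weightedTotalDegree_pow,
        weightedTotalDegree_pow, weightedLeadingForm_pow, weightedLeadingForm_pow, hF, hG, hF',
        hG', ← pow_mul, ← pow_mul, ← pow_add, hexp]
      constructor <;> ring

end Iteration

theorem stmt3_general (k : Type) [Field k] (d e : ℕ) (he : 2 ≤ e) (hed : e ≤ d)
    (z : MvPolynomial (Vars d e) k)
    (ht : 1 < weightedTotalDegree (wt d e) z) (n : ℕ) :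
    weightedTotalDegree (wt d e) (FG k d e n z).2 =
      (d ^ n - e ^ n) * weightedTotalDegree (wt d e) z ∧
    leadForm k d e (FG k d e n z).2 = (leadForm k d e z) ^ (d ^ n - e ^ n) :=
  (FG_weightedTotalDegree_weightedLeadingForm k (by omega) hed ht n).2

/-- if `z ≠ 0` has weighted total degree `t > 1` and leading form `z'`, then
for every `n ≥ 0`, `g_n(z)` has weighted total degree `(d^n - e^n) · t` and leading form
`z'^{d^n - e^n}`. -/
theorem stmt3 (k : Type) [Field k] (d e : ℕ) (hd : 2 ≤ d) (he : 2 ≤ e) (hed : e ≤ d)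
    (z : MvPolynomial (Vars d e) k) (hz : z ≠ 0)
    (ht : 1 < weightedTotalDegree (wt d e) z) (n : ℕ) :
    weightedTotalDegree (wt d e) (FG k d e n z).2 =
      (d ^ n - e ^ n) * weightedTotalDegree (wt d e) z ∧
    leadForm k d e (FG k d e n z).2 = (leadForm k d e z) ^ (d ^ n - e ^ n) :=
  stmt3_general k d e he hed z ht n
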